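/- (Lemma 3: Λ is an equivariant lift of the VIO dynamics.) Fix T_C = (R_C, x_C) ∈ SE(3), a state ξ = (P, v, p₁, …, pₙ) with qᵢ := (P T_C)⁻¹(pᵢ) ≠ 0 for all i, inputs Ω, a ∈ ℝ³, and gravity constant g. Set Ω_C := R_Cᵀ Ω and v_C := R_Cᵀ(v − x_C × Ω). Suppose A(t) = (R_A(t), x_A(t)) ∈ SE(3), w(t) ∈ ℝ³, and Qᵢ(t) = (R_{Qᵢ}(t), c_{Qᵢ}(t)) ∈ SOT(3) are differentiable curves with A(0) = (I, 0), w(0) = 0, Qᵢ(0) = (I, 1), and derivatives at t = 0 given by Ṙ_A(0) = Ω^×, ẋ_A(0) = v, ẇ(0) = −a + g R_Pᵀ e₃, Ṙ_{Qᵢ}(0) = (Ω_C + (qᵢ × v_C)/‖qᵢ‖²)^×, ċ_{Qᵢ}(0) = (qᵢᵀ v_C)/‖qᵢ‖². Then the curve t ↦ Φ((A(t), w(t), Qᵢ(t)), ξ) is differentiable at t = 0 with derivative equal to the VIO vector field at ξ: the rotation component has derivative R_P Ω^×, the translation component has derivative R_P v, the velocity component has derivative −Ω × v + a − g R_Pᵀ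 e₃, and each landmark component has derivative 0. -/

import Mathlib

open scoped InnerProductSpace Matrix

noncomputable section

/-- Vectors in ℝ³ with the Euclidean norm. -/
abbrev V3 := EuclideanSpace ℝ (Fin 3)

abbrev Mat3 := Matrix (Fin 3) (Fin 3) ℝ

/-- `R ∈ SO(3)` iff `RᵀR = I` and `det R = 1`. -/
def SO3 (R : Mat3) : Prop := R.transpose * R = 1 ∧ R.det = 1

/-- Matrix-vector multiplication. -/
def mv (M : Mat3) (q : V3) : V3 := WithLp.toLp 2 (M.mulVec q)

/-- The standard gravity direction `e₃ = (0,0,1)`. -/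
def e3 : V3 := WithLp.toLp 2 ![0, 0, 1]

/-- Elements of SE(3) are pairs `(R, x)`. -/
abbrev SE3 := Mat3 × V3

/-- SE(3) group product: `(R₁,x₁)·(R₂,x₂) = (R₁R₂, x₁ + R₁x₂)`. -/
def seMul (P Q : SE3) : SE3 := (P.1 * Q.1, P.2 + mv P.1 Q.2)

/-- SE(3) identity `(I, 0)`. -/
def seId : SE3 := (1, 0)

/-- SE(3) inverse: `P⁻¹ = (Rᵀ, −Rᵀx)`. -/
def seInv (P : SE3) : SE3 := (P.1ᵀ, -(mv P.1ᵀ P.2))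

/-- Action of SE(3) on ℝ³: `P(q) = R_P q + x_P`. -/
def seAct (P : SE3) (q : V3) : V3 := mv P.1 q + P.2

/-- The subgroup `SE_{e₃}(3) = {(R,x) ∈ SE(3) : R e₃ = e₃}`. -/
def SEe3 : Set SE3 := {S | SO3 S.1 ∧ mv S.1 e3 = e3}

/-- The skew-symmetric matrix `Ω^×` with `Ω^× y = Ω × y`. -/
def skew (Ω : V3) : Mat3 := !![0, -Ω 2, Ω 1; Ω 2, 0, -Ω 0; -Ω 1, Ω 0, 0]

/-- The cross product on ℝ³. -/
def cross3 (a b : V3) : V3 := WithLp.toLp 2 (crossProduct a b)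

/-- Elements of SOT(3) are pairs `(R_Q, c_Q)`. -/
abbrev SOT3 := Mat3 × ℝ

/-- SOT(3) product `(R₁,c₁)·(R₂,c₂) = (R₁R₂, c₁c₂)`. -/
def sotMul (Q1 Q2 : SOT3) : SOT3 := (Q1.1 * Q2.1, Q1.2 * Q2.2)

/-- SOT(3) inverse `(R_Qᵀ, c_Q⁻¹)`. -/
def sotInv (Q : SOT3) : SOT3 := (Q.1ᵀ, Q.2⁻¹)

/-- Action of SOT(3) on ℝ³: `Q(q) = c_Q R_Q q`. -/
def sotAct (Q : SOT3) (q : V3) : V3 := Q.2 • mv Q.1 q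

/-- Elements of the VI-SLAM group `G = SE₂(3) × SOT(3)ⁿ`. -/
abbrev GVI (n : ℕ) := SE3 × V3 × (Fin n → SOT3)

/-- VI-SLAM group product. -/
def gMul {n : ℕ} (X Y : GVI n) : GVI n :=
  (seMul X.1 Y.1, X.2.1 + mv X.1.1 Y.2.1, fun i => sotMul (X.2.2 i) (Y.2.2 i))

/-- VI-SLAM group identity `(I₄, 0, (I,1)ᵢ)`. -/
def gId {n : ℕ} : GVI n := (seId, 0, fun _ => (1, 1))

/-- VI-SLAM group inverse `(A⁻¹, −R_Aᵀw, Qᵢ⁻¹)`. -/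
def gInv {n : ℕ} (X : GVI n) : GVI n :=
  (seInv X.1, -(mv X.1.1ᵀ X.2.1), fun i => sotInv (X.2.2 i))

/-- Membership in the VI-SLAM group: rotation parts in SO(3), scale parts positive. -/
def gMem {n : ℕ} (X : GVI n) : Prop :=
  SO3 X.1.1 ∧ ∀ i, SO3 (X.2.2 i).1 ∧ 0 < (X.2.2 i).2

/-- The action `Φ((A, w, Qᵢ), (P, v, pᵢ)) = (PA, R_Aᵀ(v − w), (P A T_C)(Qᵢ⁻¹((P T_C)⁻¹(pᵢ))))`. -/
def Phi {n : ℕ} (TC : SE3) (X : GVI n) (ξ : SE3 × V3 × (Fin n → V3)) :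
    SE3 × V3 × (Fin n → V3) :=
  (seMul ξ.1 X.1, mv X.1.1ᵀ (ξ.2.1 - X.2.1),
    fun i => seAct (seMul (seMul ξ.1 X.1) TC)
      (sotAct (sotInv (X.2.2 i)) (seAct (seInv (seMul ξ.1 TC)) (ξ.2.2 i))))

attribute [local instance] Matrix.normedAddCommGroup Matrix.normedSpace

/-!
At the identity of the group, `Φ(·, ξ)` returns `ξ`, so each component of the curve is
differentiated by the product rule with `A(0) = (I, 0)`, `w(0) = 0`, `Qᵢ(0) = (I, 1)`.
The only real content is in the landmarks. By `(q × v) × q = ‖q‖² v − ⟪q, v⟫ q`, the lift of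
`Qᵢ` makes `Qᵢ(t)⁻¹ qᵢ` move with velocity `−Ω_C × qᵢ − v_C`: the apparent motion of a fixed
point seen from a camera with angular velocity `Ω_C` and linear velocity `v_C`. Transported
back through `P A(t) T_C`, this exactly cancels the motion `Ω × (T_C qᵢ) + v` of the camera
frame, so the landmark is stationary to first order.
-/

lemma mv_eq_toEuclideanCLM (M : Mat3) (y : V3) : mv M y = Matrix.toEuclideanCLM (𝕜 := ℝ) M y :=
  rfl

lemma mv_add (M : Mat3) (a b : V3) : mv M (a + b) = mv M a + mv M b :=
  map_add (Matrix.toEuclideanCLM (𝕜 := ℝ) M) a b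

lemma mv_sub (M : Mat3) (a b : V3) : mv M (a - b) = mv M a - mv M b :=
  map_sub (Matrix.toEuclideanCLM (𝕜 := ℝ) M) a b

lemma mv_neg (M : Mat3) (a : V3) : mv M (-a) = -mv M a :=
  map_neg (Matrix.toEuclideanCLM (𝕜 := ℝ) M) a

lemma mv_zero (M : Mat3) : mv M 0 = 0 := map_zero (Matrix.toEuclideanCLM (𝕜 := ℝ) M)

lemma mv_one (y : V3) : mv 1 y = y := by simp [mv_eq_toEuclideanCLM]

lemma mv_mul (M N : Mat3) (y : V3) : mv (M * N) y = mv M (mv N y) := by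
  simp [mv_eq_toEuclideanCLM]

lemma neg_mv (M : Mat3) (y : V3) : mv (-M) y = -mv M y := by
  simp [mv_eq_toEuclideanCLM]

lemma SO3.mul_transpose {R : Mat3} (hR : SO3 R) : R * Rᵀ = 1 :=
  mul_eq_one_comm.mp hR.1

lemma SO3.mv_mv_transpose {R : Mat3} (hR : SO3 R) (y : V3) : mv R (mv Rᵀ y) = y := by
  rw [← mv_mul, hR.mul_transpose, mv_one]

lemma SO3.adjugate_eq_transpose {R : Mat3} (hR : SO3 R) : R.adjugate = Rᵀ := by
  calc R.adjugate = (Rᵀ * R) * R.adjugate := by rw [hR.1, Matrix.one_mul]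
    _ = Rᵀ * (R.det • 1) := by rw [Matrix.mul_assoc, Matrix.mul_adjugate]
    _ = Rᵀ := by rw [hR.2, one_smul, Matrix.mul_one]

lemma cross3_mv_mv (M : Mat3) (a b : V3) :
    cross3 (mv M a) (mv M b) = mv M.adjugateᵀ (cross3 a b) := by
  ext j
  fin_cases j <;>
    simp [cross3, crossProduct, mv, Matrix.mulVec, dotProduct, Fin.sum_univ_three,
      Matrix.adjugate_fin_three] <;> ring

lemma SO3.mv_cross3 {R : Mat3} (hR : SO3 R) (a b : V3) :
    mv R (cross3 a b) = cross3 (mv R a) (mv R b) := by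
  rw [cross3_mv_mv, hR.adjugate_eq_transpose, Matrix.transpose_transpose]

lemma skew_mv (Ω y : V3) : mv (skew Ω) y = cross3 Ω y := by
  ext j
  fin_cases j <;> simp [mv, skew, cross3, crossProduct, dotProduct,
    Fin.sum_univ_three] <;> ring

lemma skew_transpose (Ω : V3) : (skew Ω)ᵀ = -skew Ω := by
  ext i j
  fin_cases i <;> fin_cases j <;> simp [skew]

lemma cross3_anticomm (a b : V3) : -cross3 a b = cross3 b a := by
  rw [cross3, cross3, ← WithLp.toLp_neg, cross_anticomm]

lemma cross3_add (a b c : V3) : cross3 a (b + c) = cross3 a b + cross3 a c := by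
  ext j; simp [cross3]

lemma add_cross3 (a b c : V3) : cross3 (a + b) c = cross3 a c + cross3 b c := by
  ext j; simp [cross3]

lemma smul_cross3 (r : ℝ) (a b : V3) : cross3 (r • a) b = r • cross3 a b := by
  ext j; simp [cross3]

lemma cross3_cross3_self (q u : V3) : cross3 (cross3 q u) q = ‖q‖ ^ 2 • u - ⟪q, u⟫_ℝ • q := by
  have hq : ‖q‖ ^ 2 = q.ofLp ⬝ᵥ q.ofLp := by
    rw [← real_inner_self_eq_norm_sq, EuclideanSpace.inner_eq_star_dotProduct, star_trivial]
  rw [hq, EuclideanSpace.inner_eq_star_dotProduct, star_trivial, cross3, cross3,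
    cross_cross_eq_smul_sub_smul]
  rfl

section Calculus

variable {E F : Type*} [NormedAddCommGroup E] [NormedSpace ℝ E] [FiniteDimensional ℝ E]
  [NormedAddCommGroup F] [NormedSpace ℝ F] {x : ℝ}

lemma LinearMap.hasDerivAt_comp (L : E →ₗ[ℝ] F) {f : ℝ → E} {f' : E} (hf : HasDerivAt f f' x) :
    HasDerivAt (fun t => L (f t)) (L f') x :=
  (LinearMap.toContinuousLinearMap L).hasFDerivAt.comp_hasDerivAt x hf

variable {M : ℝ → Mat3} {M' : Mat3} {u : ℝ → V3} {u' : V3}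

lemma HasDerivAt.matrix_transpose (hM : HasDerivAt M M' x) :
    HasDerivAt (fun t => (M t)ᵀ) M'ᵀ x :=
  (Matrix.transposeLinearEquiv (Fin 3) (Fin 3) ℝ ℝ).toLinearMap.hasDerivAt_comp hM

lemma HasDerivAt.const_matrix_mul (A : Mat3) (hM : HasDerivAt M M' x) :
    HasDerivAt (fun t => A * M t) (A * M') x :=
  (LinearMap.mulLeft ℝ A).hasDerivAt_comp hM

lemma HasDerivAt.mv_apply (hM : HasDerivAt M M' x) (hu : HasDerivAt u u' x) :
    HasDerivAt (fun t => mv (M t) (u t)) (mv M' (u x) + mv (M x) u') x := by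
  have hL : HasDerivAt (fun t => Matrix.toEuclideanCLM (𝕜 := ℝ) (M t))
      (Matrix.toEuclideanCLM (𝕜 := ℝ) M') x :=
    LinearMap.hasDerivAt_comp
      { toFun := Matrix.toEuclideanCLM (𝕜 := ℝ), map_add' := map_add _, map_smul' := map_smul _ } hM
  exact hL.clm_apply hu

lemma HasDerivAt.const_mv (A : Mat3) (hu : HasDerivAt u u' x) :
    HasDerivAt (fun t => mv A (u t)) (mv A u') x := by
  simpa [mv_eq_toEuclideanCLM] using (hasDerivAt_const x A).mv_apply hu

lemma HasDerivAt.seAct_const (P : SE3) (hu : HasDerivAt u u' x) :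
    HasDerivAt (fun t => seAct P (u t)) (mv P.1 u') x :=
  (hu.const_mv P.1).add_const P.2

end Calculus

lemma seAct_seMul (P Q : SE3) (y : V3) : seAct (seMul P Q) y = seAct P (seAct Q y) := by
  simp only [seAct, seMul, mv_mul, mv_add]
  abel

section CurvesThroughIdentity

variable {R : ℝ → Mat3} {Ω : V3} {u : ℝ → V3} {u' : V3}

lemma hasDerivAt_transpose_mv_of_eq_one (hR0 : R 0 = 1) (hR : HasDerivAt R (skew Ω) 0)
    (hu : HasDerivAt u u' 0) :
    HasDerivAt (fun t => mv (R t)ᵀ (u t)) (-cross3 Ω (u 0) + u') 0 := by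
  simpa [hR0, skew_transpose, neg_mv, skew_mv, mv_one] using hR.matrix_transpose.mv_apply hu

lemma HasDerivAt.seAct_of_eq_one {x : ℝ → V3} {v : V3} (hu : HasDerivAt u u' 0) (hR0 : R 0 = 1)
    (hR : HasDerivAt R (skew Ω) 0) (hx : HasDerivAt x v 0) :
    HasDerivAt (fun t => seAct (R t, x t) (u t)) (cross3 Ω (u 0) + u' + v) 0 := by
  have h := (hR.mv_apply hu).add hx
  rwa [hR0, mv_one, skew_mv] at h

end CurvesThroughIdentity

lemma hasDerivAt_sotAct_sotInv_of_lift {R : ℝ → Mat3} {c : ℝ → ℝ} {q ΩC vC : V3} (hq : q ≠ 0)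
    (hR0 : R 0 = 1) (hc0 : c 0 = 1)
    (hR : HasDerivAt R (skew (ΩC + (‖q‖ ^ 2)⁻¹ • cross3 q vC)) 0)
    (hc : HasDerivAt c (⟪q, vC⟫_ℝ / ‖q‖ ^ 2) 0) :
    HasDerivAt (fun t => sotAct (sotInv (R t, c t)) q) (-cross3 ΩC q - vC) 0 := by
  have hc_inv : HasDerivAt (fun t => (c t)⁻¹) (-(⟪q, vC⟫_ℝ / ‖q‖ ^ 2)) 0 := by
    have h := hc.inv (by rw [hc0]; exact one_ne_zero)
    rwa [hc0, one_pow, div_one] at h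
  have h := hc_inv.smul (hasDerivAt_transpose_mv_of_eq_one hR0 hR (hasDerivAt_const 0 q))
  rw [hc0, hR0, Matrix.transpose_one, mv_one, inv_one, one_smul, add_zero, add_cross3,
    smul_cross3, cross3_cross3_self] at h
  refine h.congr_deriv ?_
  have hq2 : ‖q‖ ^ 2 ≠ 0 := by positivity
  match_scalars <;> field_simp
  ring

lemma cross3_seAct_add_mv_add_eq_zero {TC : SE3} (hTC : SO3 TC.1) (Ω v q : V3) :
    cross3 Ω (seAct TC q) + mv TC.1 (-cross3 (mv TC.1ᵀ Ω) q - mv TC.1ᵀ (v - cross3 TC.2 Ω))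
      + v = 0 := by
  rw [mv_sub, mv_neg, hTC.mv_cross3, hTC.mv_mv_transpose, hTC.mv_mv_transpose, seAct, cross3_add,
    ← cross3_anticomm TC.2]
  abel

theorem lift_Lambda_general (n : ℕ) (TC : SE3) (hTC : SO3 TC.1) (g : ℝ)
    (P : SE3) (v : V3) (p : Fin n → V3) (Ω a : V3)
    (q : Fin n → V3) (hqdef : ∀ i, q i = seAct (seInv (seMul P TC)) (p i))
    (hq0 : ∀ i, q i ≠ 0)
    (ΩC vC : V3) (hΩC : ΩC = mv TC.1ᵀ Ω) (hvC : vC = mv TC.1ᵀ (v - cross3 TC.2 Ω))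
    (RA : ℝ → Mat3) (xA : ℝ → V3) (w : ℝ → V3)
    (RQ : Fin n → ℝ → Mat3) (cQ : Fin n → ℝ → ℝ)
    (hRA0 : RA 0 = 1) (hw0 : w 0 = 0)
    (hRQ0 : ∀ i, RQ i 0 = 1) (hcQ0 : ∀ i, cQ i 0 = 1)
    (hRA : HasDerivAt RA (skew Ω) 0)
    (hxA : HasDerivAt xA v 0)
    (hw : HasDerivAt w (-a + g • mv P.1ᵀ e3) 0)
    (hRQ : ∀ i, HasDerivAt (RQ i) (skew (ΩC + (‖q i‖ ^ 2)⁻¹ • cross3 (q i) vC)) 0)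
    (hcQ : ∀ i, HasDerivAt (cQ i) (⟪q i, vC⟫_ℝ / ‖q i‖ ^ 2) 0) :
    HasDerivAt (fun t => (Phi TC (((RA t, xA t) : SE3), w t, fun i => ((RQ i t, cQ i t) : SOT3))
        ((P, v, p) : SE3 × V3 × (Fin n → V3))).1.1) (P.1 * skew Ω) 0 ∧
    HasDerivAt (fun t => (Phi TC (((RA t, xA t) : SE3), w t, fun i => ((RQ i t, cQ i t) : SOT3))
        ((P, v, p) : SE3 × V3 × (Fin n → V3))).1.2) (mv P.1 v) 0 ∧
    HasDerivAt (fun t => (Phi TC (((RA t, xA t) : SE3), w t, fun i => ((RQ i t, cQ i t) : SOT3))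
        ((P, v, p) : SE3 × V3 × (Fin n → V3))).2.1)
      (-cross3 Ω v + a - g • mv P.1ᵀ e3) 0 ∧
    ∀ i : Fin n, HasDerivAt (fun t => (Phi TC (((RA t, xA t) : SE3), w t, fun j => ((RQ j t, cQ j t) : SOT3))
        ((P, v, p) : SE3 × V3 × (Fin n → V3))).2.2 i) 0 0 := by
  refine ⟨hRA.const_matrix_mul P.1, (hxA.const_mv P.1).const_add P.2, ?_, fun i => ?_⟩
  · have h := hasDerivAt_transpose_mv_of_eq_one hRA0 hRA (hw.const_sub v)
    rw [hw0, sub_zero] at h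
    refine h.congr_deriv ?_
    module
  · have hy := hasDerivAt_sotAct_sotInv_of_lift (hq0 i) (hRQ0 i) (hcQ0 i) (hRQ i) (hcQ i)
    have hy0 : sotAct (sotInv (RQ i 0, cQ i 0)) (q i) = q i := by
      simp [sotAct, sotInv, hRQ0, hcQ0, mv_one]
    have h := ((hy.seAct_const TC).seAct_of_eq_one hRA0 hRA hxA).seAct_const P
    rw [hy0, hΩC, hvC, cross3_seAct_add_mv_add_eq_zero hTC, mv_zero] at h
    show HasDerivAt (fun t => seAct (seMul (seMul P (RA t, xA t)) TC)
      (sotAct (sotInv (RQ i t, cQ i t)) (seAct (seInv (seMul P TC)) (p i)))) 0 0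
    simpa only [seAct_seMul, ← hqdef] using h

/-- (Lemma 3: `Λ` is an equivariant lift of the VIO dynamics.)
For curves in the VI-SLAM group through the identity whose derivatives at `t = 0` are
given by the lift `Λ`, the curve `t ↦ Φ((A(t), w(t), Qᵢ(t)), ξ)` has derivative at
`t = 0` equal to the VIO vector field at `ξ`. -/
theorem lift_Lambda (n : ℕ) (hn : 1 ≤ n) (TC : SE3) (hTC : SO3 TC.1) (g : ℝ)
    (P : SE3) (hP : SO3 P.1) (v : V3) (p : Fin n → V3) (Ω a : V3)
    (q : Fin n → V3) (hqdef : ∀ i, q i = seAct (seInv (seMul P TC)) (p i))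
    (hq0 : ∀ i, q i ≠ 0)
    (ΩC vC : V3) (hΩC : ΩC = mv TC.1ᵀ Ω) (hvC : vC = mv TC.1ᵀ (v - cross3 TC.2 Ω))
    (RA : ℝ → Mat3) (xA : ℝ → V3) (w : ℝ → V3)
    (RQ : Fin n → ℝ → Mat3) (cQ : Fin n → ℝ → ℝ)
    (hASO : ∀ t, SO3 (RA t)) (hQSO : ∀ i t, SO3 (RQ i t)) (hcpos : ∀ i t, 0 < cQ i t)
    (hRA0 : RA 0 = 1) (hxA0 : xA 0 = 0) (hw0 : w 0 = 0)
    (hRQ0 : ∀ i, RQ i 0 = 1) (hcQ0 : ∀ i, cQ i 0 = 1)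
    (hRA : HasDerivAt RA (skew Ω) 0)
    (hxA : HasDerivAt xA v 0)
    (hw : HasDerivAt w (-a + g • mv P.1ᵀ e3) 0)
    (hRQ : ∀ i, HasDerivAt (RQ i) (skew (ΩC + (‖q i‖ ^ 2)⁻¹ • cross3 (q i) vC)) 0)
    (hcQ : ∀ i, HasDerivAt (cQ i) (⟪q i, vC⟫_ℝ / ‖q i‖ ^ 2) 0) :
    HasDerivAt (fun t => (Phi TC (((RA t, xA t) : SE3), w t, fun i => ((RQ i t, cQ i t) : SOT3))
        ((P, v, p) : SE3 × V3 × (Fin n → V3))).1.1) (P.1 * skew Ω) 0 ∧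
    HasDerivAt (fun t => (Phi TC (((RA t, xA t) : SE3), w t, fun i => ((RQ i t, cQ i t) : SOT3))
        ((P, v, p) : SE3 × V3 × (Fin n → V3))).1.2) (mv P.1 v) 0 ∧
    HasDerivAt (fun t => (Phi TC (((RA t, xA t) : SE3), w t, fun i => ((RQ i t, cQ i t) : SOT3))
        ((P, v, p) : SE3 × V3 × (Fin n → V3))).2.1)
      (-cross3 Ω v + a - g • mv P.1ᵀ e3) 0 ∧
    ∀ i : Fin n, HasDerivAt (fun t => (Phi TC (((RA t, xA t) : SE3), w t, fun j => ((RQ j t, cQ j t) : SOT3))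
        ((P, v, p) : SE3 × V3 × (Fin n → V3))).2.2 i) 0 0 :=
  lift_Lambda_general n TC hTC g P v p Ω a q hqdef hq0 ΩC vC hΩC hvC RA xA w RQ cQ hRA0 hw0 hRQ0
    hcQ0 hRA hxA hw hRQ hcQ
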